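/- Let K be an algebraically closed field, complete with respect to a nontrivial non-Archimedean absolute value. Then the Berkovich affine line 𝔸¹_Berk(K) is Hausdorff, locally compact, and uniquely arcwise connected: any two distinct points ξ ≠ ξ' of 𝔸¹_Berk(K) are joined by an arc (a subspace homeomorphic to [0,1] with endpoints ξ and ξ'), and any two arcs joining ξ and ξ' have the same image. -/

import Mathlib

open Polynomial Filter

/-- A non-Archimedean absolute value on a field `K`. -/
def IsNonarchAbs {K : Type*} [Field K] (abv : K → ℝ) : Prop :=
  (∀ x, 0 ≤ abv x) ∧ (∀ x, abv x = 0 ↔ x = 0) ∧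
  (∀ x y, abv (x * y) = abv x * abv y) ∧
  (∀ x y, abv (x + y) ≤ max (abv x) (abv y))

/-- A multiplicative seminorm on `K[X]` extending the absolute value `abv`. -/
def IsMultSeminorm {K : Type*} [Field K] (abv : K → ℝ) (N : Polynomial K → ℝ) : Prop :=
  (∀ f, 0 ≤ N f) ∧ (∀ c : K, N (C c) = abv c) ∧
  (∀ f g, N (f + g) ≤ N f + N g) ∧ (∀ f g, N (f * g) = N f * N g)

/-- The Berkovich affine line over `(K, abv)`: the set of multiplicative seminorms on
`K[X]` extending `abv`, with the topology of pointwise convergence (the subspace topology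
from the product topology on `K[X] → ℝ`). -/
abbrev BerkLine (K : Type*) [Field K] (abv : K → ℝ) :=
  {N : Polynomial K → ℝ // IsMultSeminorm abv N}

/-!
For a point `N` and `r ≥ 0`, `taylorNorm N r f = max_k N (∂ᵏ f) rᵏ` (Hasse derivatives `∂ᵏ`) is
the Gauss norm of radius `r` of the Taylor expansion `f (X + T)` over `N`, hence again a point:
the point reached from `N` by moving towards `∞` until "radius" `r`. Since `K` is algebraically
closed, a point is determined by its values on the linear polynomials `X - a`, and on these
`taylorNorm N r (X - a) = max (N (X - a)) r`. This makes `r ↦ taylorNorm N r` a continuous path,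
injective beyond the radius `inf_a N (X - a)` of `N`, and the paths of two points `N`, `N'`
coincide from a least radius `m` on. Climbing from `N` to the merge point and descending to `N'`
is an arc.

For `t ≤ m`, the point `ζ = taylorNorm N t` is the Gauss point of a disc `D(c, t)` containing `N`,
and the complement of `ζ` splits into the open disc `{σ | σ (X - c) < t}`, containing `N`, and an
open set containing `N'`. So every connected set containing `N` and `N'` contains the whole
segment built above, in particular every arc from `N` to `N'`, and an arc containing another arc
with the same endpoints coincides with it.

Local compactness: `{σ | σ X ≤ R}` is a closed subset of a product of compact intervals.
-/

open Set

theorem le_of_forall_pow_le_succ_mul_pow {c M : ℝ} (hM : 0 ≤ M)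
    (h : ∀ n : ℕ, c ^ n ≤ (n + 1) * M ^ n) : c ≤ M := by
  by_contra! hMc
  rcases hM.eq_or_lt with rfl | hM
  · linarith [h 1]
  obtain ⟨n, hn⟩ := Real.exists_natCast_add_one_lt_pow_of_one_lt ((one_lt_div hM).mpr hMc)
  rw [div_pow, lt_div_iff₀ (pow_pos hM n)] at hn
  exact (h n).not_gt hn

section MulRingSeminorm

variable {R F : Type*} [FunLike F R ℝ]

theorem isNonarchimedean_of_forall_natCast_le_one [CommRing R] [MulRingSeminormClass F R ℝ]
    {v : F} (h : ∀ n : ℕ, v n ≤ 1) : IsNonarchimedean v := by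
  intro x y
  set M := max (v x) (v y)
  have hx := apply_nonneg v x
  have hy := apply_nonneg v y
  refine le_of_forall_pow_le_succ_mul_pow (hx.trans (le_max_left _ _)) fun n ↦ ?_
  calc v (x + y) ^ n = v (∑ k ∈ Finset.range (n + 1), x ^ k * y ^ (n - k) * n.choose k) := by
        rw [← map_pow, add_pow]
    _ ≤ ∑ k ∈ Finset.range (n + 1), v (x ^ k * y ^ (n - k) * n.choose k) :=
        Finset.le_sum_of_subadditive v (map_zero v).le (map_add_le_add v) _ _
    _ ≤ ∑ k ∈ Finset.range (n + 1), M ^ n := by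
        refine Finset.sum_le_sum fun k hk ↦ ?_
        rw [map_mul, map_mul, map_pow, map_pow,
          ← pow_mul_pow_sub M (Finset.mem_range_succ_iff.mp hk)]
        refine (mul_le_of_le_one_right (by positivity) (h _)).trans ?_
        gcongr
        exacts [le_max_left _ _, le_max_right _ _]
    _ = (n + 1) * M ^ n := by simp

theorem Polynomial.gaussNorm_mul_of_isNonarchimedean [Ring R] [MulRingSeminormClass F R ℝ]
    {v : F} (hna : IsNonarchimedean v) {c : ℝ} (hc : 0 ≤ c) (p q : R[X]) :
    (p * q).gaussNorm v c = p.gaussNorm v c * q.gaussNorm v c := by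
  refine le_antisymm (gaussNorm_mul_le v hna p q hc) ?_
  rcases hc.eq_or_lt with rfl | hc
  · simp [mul_coeff_zero]
  -- With `i`, `j` the least indices attaining the Gauss norms of `p`, `q`, the term
  -- `p_i q_j` strictly dominates the coefficient of `X ^ (i + j)` in `p * q`.
  obtain ⟨i, hpi, hp⟩ := p.exists_min_eq_gaussNorm v hc.le
  obtain ⟨j, hqj, hq⟩ := q.exists_min_eq_gaussNorm v hc.le
  have hp0 := p.gaussNorm_nonneg v hc.le
  have hq0 := q.gaussNorm_nonneg v hc.le
  rcases (mul_nonneg hp0 hq0).eq_or_lt with hzero | hpos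
  · exact hzero ▸ (p * q).gaussNorm_nonneg v hc.le
  have hdom : ∀ x ∈ Finset.HasAntidiagonal.antidiagonal (i + j), x ≠ (i, j) →
      v (p.coeff x.1 * q.coeff x.2) < v (p.coeff i * q.coeff j) := by
    rintro ⟨k, l⟩ hkl hne
    rw [Finset.HasAntidiagonal.mem_antidiagonal] at hkl
    refine lt_of_mul_lt_mul_right ?_ (pow_nonneg hc.le (i + j))
    have hp_pos : 0 < p.gaussNorm v c := pos_of_mul_pos_left hpos hq0
    have hq_pos : 0 < q.gaussNorm v c := pos_of_mul_pos_right hpos hp0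
    calc v (p.coeff k * q.coeff l) * c ^ (i + j)
        = (v (p.coeff k) * c ^ k) * (v (q.coeff l) * c ^ l) := by
          rw [← hkl, map_mul, pow_add]; ring
      _ < p.gaussNorm v c * q.gaussNorm v c := by
          rcases lt_or_gt_of_ne (fun h : k = i ↦ hne (by simp [h]; omega)) with hk | hk
          · calc _ ≤ (v (p.coeff k) * c ^ k) * q.gaussNorm v c := by
                  gcongr; exact q.le_gaussNorm v hc.le l
              _ < _ := by gcongr; exact hp k hk
          · calc _ ≤ p.gaussNorm v c * (v (q.coeff l) * c ^ l) := by
                  gcongr; exact p.le_gaussNorm v hc.le k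
              _ < _ := by gcongr; exact hq l (by omega)
      _ = v (p.coeff i * q.coeff j) * c ^ (i + j) := by rw [hpi, hqj, map_mul, pow_add]; ring
  calc p.gaussNorm v c * q.gaussNorm v c = v (p.coeff i * q.coeff j) * c ^ (i + j) := by
        rw [hpi, hqj, map_mul, pow_add]; ring
    _ = v ((p * q).coeff (i + j)) * c ^ (i + j) := by
        rw [coeff_mul, IsNonarchimedean.apply_sum_eq_of_lt hna (fun a ↦ (map_neg_eq_map v a).symm)
          (k := (i, j)) (Finset.HasAntidiagonal.mem_antidiagonal.mpr rfl) hdom]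
    _ ≤ (p * q).gaussNorm v c := (p * q).le_gaussNorm v hc.le _

end MulRingSeminorm

theorem exists_arc_of_injOn {X : Type*} [TopologicalSpace X] {f : ℝ → X} {a b : ℝ} (hab : a < b)
    (hf : ContinuousOn f (Icc a b)) (hinj : InjOn f (Icc a b)) :
    ∃ γ : unitInterval → X, Continuous γ ∧ Function.Injective γ ∧ γ 0 = f a ∧ γ 1 = f b ∧
      range γ = f '' Icc a b := by
  let e := (iccHomeoI a b hab).symm
  refine ⟨fun u ↦ f (e u), hf.comp_continuous (continuous_subtype_val.comp e.continuous)
    fun u ↦ (e u).2, fun u v huv ↦ e.injective (Subtype.ext (hinj (e u).2 (e v).2 huv)),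
    by simp [e], by simp [e], ?_⟩
  ext x
  constructor
  · rintro ⟨u, rfl⟩
    exact ⟨e u, (e u).2, rfl⟩
  · rintro ⟨s, hs, rfl⟩
    exact ⟨e.symm ⟨s, hs⟩, by simp⟩

theorem eq_range_of_isPreconnected {X : Type*} [TopologicalSpace X] [T2Space X]
    {γ : unitInterval → X} (hγ : Continuous γ) (hγi : Function.Injective γ) {S : Set X}
    (hS : IsPreconnected S) (hSγ : S ⊆ range γ) (h0 : γ 0 ∈ S) (h1 : γ 1 ∈ S) : S = range γ := by
  have hpre : IsPreconnected (γ ⁻¹' S) :=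
    (hγ.isClosedEmbedding hγi).isInducing.isPreconnected_image.mp
      (by rwa [image_preimage_eq_of_subset hSγ])
  have huniv : γ ⁻¹' S = univ :=
    eq_univ_of_forall fun _ ↦ hpre.Icc_subset h0 h1 ⟨unitInterval.nonneg', unitInterval.le_one'⟩
  rw [← image_preimage_eq_of_subset hSγ, huniv, image_univ]

section Taylor

variable {R : Type*} [CommRing R]

/-- `f ↦ f (X + T)`, where `T` is the outer variable of `R[X][X]`. -/
noncomputable def taylorExpansion : R[X] →+* R[X][X] :=
  (taylorAlgHom (X : R[X])).toRingHom.comp (mapRingHom C)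

theorem coeff_taylorExpansion (f : R[X]) (k : ℕ) :
    (taylorExpansion f).coeff k = hasseDeriv k f := by
  have hmap : hasseDeriv k (f.map C) = (hasseDeriv k f).map C := by
    ext n : 1
    simp [hasseDeriv_coeff, coeff_map]
  simp [taylorExpansion, taylor_coeff, hmap, eval_map]

noncomputable def taylorNorm (N : R[X] → ℝ) (r : ℝ) (f : R[X]) : ℝ :=
  (Finset.range (f.natDegree + 1)).sup' Finset.nonempty_range_add_one
    fun k ↦ N (hasseDeriv k f) * r ^ k

theorem apply_hasseDeriv_mul_pow_le_taylorNorm (N : R[X] → ℝ) (r : ℝ) {f : R[X]} {k : ℕ}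
    (hk : k ≤ f.natDegree) : N (hasseDeriv k f) * r ^ k ≤ taylorNorm N r f :=
  Finset.le_sup' (fun k ↦ N (hasseDeriv k f) * r ^ k) (Finset.mem_range_succ_iff.mpr hk)

theorem le_taylorNorm (N : R[X] → ℝ) (r : ℝ) (f : R[X]) : N f ≤ taylorNorm N r f := by
  simpa using apply_hasseDeriv_mul_pow_le_taylorNorm N r f.natDegree.zero_le

theorem continuous_taylorNorm (N : R[X] → ℝ) : Continuous (taylorNorm N) :=
  continuous_pi fun _ ↦
    Continuous.finset_sup'_apply _ fun k _ ↦ continuous_const.mul (continuous_pow k)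

theorem taylorNorm_eq_gaussNorm {F : Type*} [FunLike F R[X] ℝ] [ZeroHomClass F R[X] ℝ]
    [NonnegHomClass F R[X] ℝ] (v : F) {r : ℝ} (hr : 0 ≤ r) (f : R[X]) :
    taylorNorm v r f = (taylorExpansion f).gaussNorm v r := by
  refine le_antisymm (Finset.sup'_le _ _ fun k _ ↦ ?_) ?_
  · simpa [coeff_taylorExpansion] using (taylorExpansion f).le_gaussNorm v hr k
  obtain ⟨k, hk⟩ := (taylorExpansion f).exists_eq_gaussNorm v r
  rw [hk, coeff_taylorExpansion]
  rcases le_or_gt k f.natDegree with hkf | hkf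
  · exact apply_hasseDeriv_mul_pow_le_taylorNorm v r hkf
  · simpa [hasseDeriv_eq_zero_of_lt_natDegree f k hkf] using
      (apply_nonneg v f).trans (le_taylorNorm v r f)

end Taylor

section Berkovich

variable {K : Type*} [Field K] {abv : K → ℝ}

def IsNonarchAbs.toAbsoluteValue (habv : IsNonarchAbs abv) : AbsoluteValue K ℝ where
  toFun := abv
  map_mul' := habv.2.2.1
  nonneg' := habv.1
  eq_zero' := habv.2.1
  add_le' x y := (habv.2.2.2 x y).trans (max_le_add_of_nonneg (habv.1 x) (habv.1 y))

theorem isClosed_setOf_isMultSeminorm (abv : K → ℝ) :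
    IsClosed {N : K[X] → ℝ | IsMultSeminorm abv N} := by
  simp only [IsMultSeminorm, ofPred_and, ofPred_forall]
  refine .inter (isClosed_iInter fun f ↦ isClosed_le continuous_const (continuous_apply f))
    (.inter (isClosed_iInter fun c ↦ isClosed_eq (continuous_apply _) continuous_const)
    (.inter (isClosed_iInter fun f ↦ isClosed_iInter fun g ↦ isClosed_le (continuous_apply _)
      ((continuous_apply f).add (continuous_apply g)))
    (isClosed_iInter fun f ↦ isClosed_iInter fun g ↦ isClosed_eq (continuous_apply _)
      ((continuous_apply f).mul (continuous_apply g)))))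

namespace IsMultSeminorm

variable (habv : IsNonarchAbs abv) {N N' : K[X] → ℝ} (hN : IsMultSeminorm abv N)
include hN

theorem map_C (c : K) : N (C c) = abv c := hN.2.1 c

theorem ext [IsAlgClosed K] (hN' : IsMultSeminorm abv N')
    (h : ∀ a, N (X - C a) = N' (X - C a)) : N = N' := by
  funext f
  rw [← C_leadingCoeff_mul_prod_multiset_X_sub_C (IsAlgClosed.card_roots_eq_natDegree (p := f))]
  induction f.roots using Multiset.induction with
  | empty => simp [hN.map_C, hN'.map_C]
  | cons a s ih =>
    rw [Multiset.map_cons, Multiset.prod_cons, mul_left_comm, hN.2.2.2, hN'.2.2.2, h, ih]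

include habv

def toMulRingSeminorm : MulRingSeminorm K[X] where
  toFun := N
  map_zero' := by rw [← C_0, hN.map_C]; exact map_zero habv.toAbsoluteValue
  add_le' := hN.2.2.1
  neg' f := by
    have : abv (-1) = 1 := (habv.toAbsoluteValue.map_neg 1).trans habv.toAbsoluteValue.map_one
    rw [neg_eq_neg_one_mul, ← C_1, ← C_neg, hN.2.2.2, hN.map_C, this, one_mul]
  map_one' := by rw [← C_1, hN.map_C]; exact map_one habv.toAbsoluteValue
  map_mul' := hN.2.2.2

theorem coe_toMulRingSeminorm : ⇑(hN.toMulRingSeminorm habv) = N := rfl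

theorem map_zero : N 0 = 0 := _root_.map_zero (hN.toMulRingSeminorm habv)

theorem map_one : N 1 = 1 := _root_.map_one (hN.toMulRingSeminorm habv)

theorem map_neg (f : K[X]) : N (-f) = N f := map_neg_eq_map (hN.toMulRingSeminorm habv) f

theorem map_pow (f : K[X]) (n : ℕ) : N (f ^ n) = N f ^ n :=
  _root_.map_pow (hN.toMulRingSeminorm habv) f n

theorem isNonarchimedean : IsNonarchimedean N :=
  isNonarchimedean_of_forall_natCast_le_one (v := hN.toMulRingSeminorm habv) fun n ↦ by
    rw [← map_natCast C]
    exact (hN.map_C n).trans_le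
      (IsNonarchimedean.apply_natCast_le_one (f := habv.toAbsoluteValue) habv.2.2.2)

theorem map_add_eq_max_of_ne {f g : K[X]} (h : N f ≠ N g) : N (f + g) = max (N f) (N g) :=
  (hN.isNonarchimedean habv).add_eq_max_of_ne (f := hN.toMulRingSeminorm habv) h

theorem abv_sub_le_max (b c : K) : abv (c - b) ≤ max (N (X - C b)) (N (X - C c)) := by
  have h := hN.isNonarchimedean habv (X - C b) (-(X - C c))
  have hcb : X - C b + -(X - C c) = C (c - b) := by rw [C_sub]; ring
  rwa [hcb, hN.map_C, hN.map_neg habv] at h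

theorem le_sum_of_apply_X_le {R : ℝ} (hR : N X ≤ R) (f : K[X]) :
    N f ≤ ∑ i ∈ Finset.range (f.natDegree + 1), abv (f.coeff i) * R ^ i := by
  conv_lhs => rw [f.as_sum_range_C_mul_X_pow]
  refine (Finset.le_sum_of_subadditive N (hN.map_zero habv).le hN.2.2.1 _ _).trans
    (Finset.sum_le_sum fun i _ ↦ ?_)
  rw [hN.2.2.2, hN.map_C, hN.map_pow habv]
  exact mul_le_mul_of_nonneg_left (pow_le_pow_left₀ (hN.1 X) hR i) (habv.1 _)

theorem taylorNorm_eq_gaussNorm {r : ℝ} (hr : 0 ≤ r) (f : K[X]) :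
    taylorNorm N r f = (taylorExpansion f).gaussNorm (hN.toMulRingSeminorm habv) r := by
  simpa only [coe_toMulRingSeminorm] using
    _root_.taylorNorm_eq_gaussNorm (hN.toMulRingSeminorm habv) hr f

end IsMultSeminorm

section TaylorNorm

variable (habv : IsNonarchAbs abv) {N N' : K[X] → ℝ} (hN : IsMultSeminorm abv N)
include habv hN

theorem isMultSeminorm_taylorNorm {r : ℝ} (hr : 0 ≤ r) :
    IsMultSeminorm abv (taylorNorm N r) := by
  have hna := hN.isNonarchimedean habv
  simp only [IsMultSeminorm, hN.taylorNorm_eq_gaussNorm habv hr, map_add, map_mul]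
  refine ⟨fun f ↦ gaussNorm_nonneg _ _ hr, fun c ↦ ?_,
    fun f g ↦ (isNonarchimedean_gaussNorm _ hna hr).add_le fun _ ↦ gaussNorm_nonneg _ _ hr,
    fun f g ↦ gaussNorm_mul_of_isNonarchimedean hna hr _ _⟩
  simp only [taylorExpansion, RingHom.comp_apply, coe_mapRingHom, map_C, AlgHom.toRingHom_eq_coe,
    RingHom.coe_coe, taylorAlgHom_apply, taylor_C, gaussNorm_C, hN.coe_toMulRingSeminorm habv,
    hN.map_C]

theorem taylorNorm_X_sub_C (r : ℝ) (a : K) :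
    taylorNorm N r (X - C a) = max (N (X - C a)) r := by
  refine le_antisymm (Finset.sup'_le _ _ fun k hk ↦ ?_) (max_le (le_taylorNorm N r _) ?_)
  · rw [natDegree_X_sub_C, Finset.mem_range] at hk
    interval_cases k
    · simp
    · simp [hN.map_one habv]
  · simpa [hN.map_one habv] using
      apply_hasseDeriv_mul_pow_le_taylorNorm N r (natDegree_X_sub_C a).ge

/-- Once `N (X - C c) ≤ t`, the point `taylorNorm N t` no longer depends on `N`: it is the Gauss
point of the disc of centre `c` and radius `t`. -/
theorem taylorNorm_X_sub_C_of_le {c : K} {t : ℝ} (hc : N (X - C c) ≤ t) (a : K) :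
    taylorNorm N t (X - C a) = max (abv (c - a)) t := by
  have hXa : X - C a = (X - C c) + C (c - a) := by rw [C_sub]; ring
  rw [taylorNorm_X_sub_C habv hN, hXa]
  by_cases h : N (X - C c) = abv (c - a)
  · have hle : N (X - C c + C (c - a)) ≤ abv (c - a) :=
      (hN.isNonarchimedean habv _ _).trans (by rw [h, hN.map_C, max_self])
    rw [max_eq_right (hle.trans (h ▸ hc)), max_eq_right (h ▸ hc)]
  · rw [hN.map_add_eq_max_of_ne habv (by rwa [hN.map_C]), hN.map_C, max_assoc,
      max_eq_right (le_max_of_le_right hc)]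

variable [IsAlgClosed K]

theorem taylorNorm_taylorNorm {r s : ℝ} (hr : 0 ≤ r) (hs : 0 ≤ s) :
    taylorNorm (taylorNorm N r) s = taylorNorm N (max r s) := by
  have hNr := isMultSeminorm_taylorNorm habv hN hr
  refine (isMultSeminorm_taylorNorm habv hNr hs).ext
    (isMultSeminorm_taylorNorm habv hN (hr.trans (le_max_left r s))) fun a ↦ ?_
  rw [taylorNorm_X_sub_C habv hNr, taylorNorm_X_sub_C habv hN, taylorNorm_X_sub_C habv hN,
    max_assoc]

theorem taylorNorm_eq_of_X_sub_C_le (hN' : IsMultSeminorm abv N') {c : K} {t : ℝ}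
    (hc : N (X - C c) ≤ t) (hc' : N' (X - C c) ≤ t) : taylorNorm N t = taylorNorm N' t := by
  have ht : 0 ≤ t := (hN.1 _).trans hc
  refine (isMultSeminorm_taylorNorm habv hN ht).ext (isMultSeminorm_taylorNorm habv hN' ht)
    fun a ↦ ?_
  rw [taylorNorm_X_sub_C_of_le habv hN hc, taylorNorm_X_sub_C_of_le habv hN' hc']

end TaylorNorm

noncomputable def radius (N : K[X] → ℝ) : ℝ := ⨅ a, N (X - C a)

theorem exists_X_sub_C_lt_of_radius_lt {N : K[X] → ℝ} {s : ℝ} (h : radius N < s) :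
    ∃ a, N (X - C a) < s :=
  exists_lt_of_ciInf_lt h

section Radius

variable (habv : IsNonarchAbs abv) {N : K[X] → ℝ} (hN : IsMultSeminorm abv N)
include hN

theorem radius_nonneg : 0 ≤ radius N := le_ciInf fun _ ↦ hN.1 _

theorem radius_le (a : K) : radius N ≤ N (X - C a) :=
  ciInf_le ⟨0, by rintro _ ⟨b, rfl⟩; exact hN.1 _⟩ a

include habv

theorem taylorNorm_eq_self [IsAlgClosed K] {r : ℝ} (hr : 0 ≤ r) (h : r ≤ radius N) :
    taylorNorm N r = N :=
  (isMultSeminorm_taylorNorm habv hN hr).ext hN fun a ↦ by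
    rw [taylorNorm_X_sub_C habv hN, max_eq_left (h.trans (radius_le hN a))]

theorem taylorNorm_ne {r s : ℝ} (hrs : r < s) (hs : radius N < s) :
    taylorNorm N r ≠ taylorNorm N s := by
  obtain ⟨a, ha⟩ := exists_X_sub_C_lt_of_radius_lt hs
  intro h
  have := congrFun h (X - C a)
  rw [taylorNorm_X_sub_C habv hN, taylorNorm_X_sub_C habv hN, max_eq_right ha.le] at this
  exact (max_lt ha hrs).ne this

theorem injOn_taylorNorm (m : ℝ) : InjOn (taylorNorm N) (Icc (min (radius N) m) m) := by
  have key : ∀ r ∈ Icc (min (radius N) m) m, ∀ s ∈ Icc (min (radius N) m) m,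
      r < s → taylorNorm N r ≠ taylorNorm N s := fun r hr s hs hrs ↦
    taylorNorm_ne habv hN hrs <|
      ((min_le_iff.mp hr.1).resolve_right (hrs.trans_le hs.2).not_ge).trans_lt hrs
  intro r hr s hs h
  by_contra hne
  rcases lt_or_gt_of_ne hne with hrs | hsr
  exacts [key r hr s hs hrs h, key s hs r hr hsr h.symm]

end Radius

noncomputable def mergeRadius (N N' : K[X] → ℝ) : ℝ :=
  sInf {r | 0 ≤ r ∧ taylorNorm N r = taylorNorm N' r}

theorem mergeRadius_comm (N N' : K[X] → ℝ) : mergeRadius N N' = mergeRadius N' N := by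
  simp only [mergeRadius, eq_comm]

theorem mergeRadius_nonneg (N N' : K[X] → ℝ) : 0 ≤ mergeRadius N N' :=
  Real.sInf_nonneg fun _ h ↦ h.1

theorem mergeRadius_le {N N' : K[X] → ℝ} {r : ℝ} (hr : 0 ≤ r)
    (h : taylorNorm N r = taylorNorm N' r) : mergeRadius N N' ≤ r :=
  csInf_le ⟨0, fun _ h ↦ h.1⟩ ⟨hr, h⟩

noncomputable def joinPath (N N' : K[X] → ℝ) (s : ℝ) : K[X] → ℝ :=
  if s ≤ mergeRadius N N' then taylorNorm N s else taylorNorm N' (2 * mergeRadius N N' - s)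

theorem joinPath_of_le {N N' : K[X] → ℝ} {s : ℝ} (hs : s ≤ mergeRadius N N') :
    joinPath N N' s = taylorNorm N s :=
  if_pos hs

section MergeRadius

variable [IsAlgClosed K] (habv : IsNonarchAbs abv) {N N' : K[X] → ℝ}
  (hN : IsMultSeminorm abv N) (hN' : IsMultSeminorm abv N')
include habv hN hN'

theorem mergeRadius_le_of_X_sub_C_le {c : K} {t : ℝ} (hc : N (X - C c) ≤ t)
    (hc' : N' (X - C c) ≤ t) : mergeRadius N N' ≤ t :=
  mergeRadius_le ((hN.1 _).trans hc) (taylorNorm_eq_of_X_sub_C_le habv hN hN' hc hc')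

theorem mergeRadius_le_max {r s : ℝ} (hr : 0 ≤ r) (hs : 0 ≤ s)
    (h : taylorNorm N r = taylorNorm N' s) : mergeRadius N N' ≤ max r s := by
  refine mergeRadius_le (hr.trans (le_max_left r s)) ?_
  have hN_max := taylorNorm_taylorNorm habv hN hr (hr.trans (le_max_left r s))
  have hN'_max := taylorNorm_taylorNorm habv hN' hs (hr.trans (le_max_left r s))
  rw [max_eq_right (le_max_left r s)] at hN_max
  rw [max_eq_right (le_max_right r s)] at hN'_max
  rw [← hN_max, ← hN'_max, h]

theorem taylorNorm_eq_of_mergeRadius_le {r : ℝ} (h : mergeRadius N N' ≤ r) :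
    taylorNorm N r = taylorNorm N' r := by
  have hne : {r | 0 ≤ r ∧ taylorNorm N r = taylorNorm N' r}.Nonempty :=
    ⟨_, (hN.1 _).trans (le_max_left _ _),
      taylorNorm_eq_of_X_sub_C_le habv hN hN' (c := 0) (le_max_left _ _) (le_max_right _ _)⟩
  have hgt : EqOn (taylorNorm N) (taylorNorm N') (Ioi (mergeRadius N N')) := fun s hs ↦ by
    obtain ⟨r, ⟨hr, hNr⟩, hrs⟩ := exists_lt_of_csInf_lt hne hs
    have hs : 0 ≤ s := hr.trans hrs.le
    rw [← max_eq_right hrs.le, ← taylorNorm_taylorNorm habv hN hr hs,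
      ← taylorNorm_taylorNorm habv hN' hr hs, hNr]
  exact hgt.closure (continuous_taylorNorm N) (continuous_taylorNorm N') (by rwa [closure_Ioi])

theorem eq_mergeRadius_of_taylorNorm_eq {r s : ℝ} (hr : 0 ≤ r) (hrm : r ≤ mergeRadius N N')
    (hs : s ∈ Icc (min (radius N') (mergeRadius N N')) (mergeRadius N N'))
    (h : taylorNorm N r = taylorNorm N' s) : s = mergeRadius N N' := by
  have hs0 : 0 ≤ s := (le_min (radius_nonneg hN') (mergeRadius_nonneg N N')).trans hs.1
  by_contra hsm
  have hsm : s < mergeRadius N N' := lt_of_le_of_ne hs.2 hsm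
  have hrm : r = mergeRadius N N' := le_antisymm hrm
    ((le_max_iff.mp (mergeRadius_le_max habv hN hN' hr hs0 h)).resolve_right hsm.not_ge)
  rw [hrm, taylorNorm_eq_of_mergeRadius_le habv hN hN' le_rfl] at h
  exact hsm.ne (injOn_taylorNorm habv hN' _ hs ⟨min_le_right _ _, le_rfl⟩ h.symm)

theorem joinPath_of_ge {s : ℝ} (hs : mergeRadius N N' ≤ s) :
    joinPath N N' s = taylorNorm N' (2 * mergeRadius N N' - s) := by
  rcases hs.eq_or_lt with rfl | hs
  · rw [joinPath_of_le le_rfl, two_mul, add_sub_cancel_right,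
      taylorNorm_eq_of_mergeRadius_le habv hN hN' le_rfl]
  · exact if_neg hs.not_ge

theorem continuous_joinPath : Continuous (joinPath N N') :=
  Continuous.if_le (continuous_taylorNorm N) ((continuous_taylorNorm N').comp (by fun_prop))
    continuous_id continuous_const fun s hs ↦ by
      rw [hs, two_mul, add_sub_cancel_right, taylorNorm_eq_of_mergeRadius_le habv hN hN' le_rfl]

theorem injOn_joinPath : InjOn (joinPath N N') (Icc (min (radius N) (mergeRadius N N'))
    (2 * mergeRadius N N' - min (radius N') (mergeRadius N N'))) := by
  set m := mergeRadius N N'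
  have ha : min (radius N) m ≤ m := min_le_right _ _
  have hb : min (radius N') m ≤ m := min_le_right _ _
  have ha0 : 0 ≤ min (radius N) m := le_min (radius_nonneg hN) (mergeRadius_nonneg N N')
  have hrefl : ∀ s ∈ Ioc m (2 * m - min (radius N') m), 2 * m - s ∈ Icc (min (radius N') m) m :=
    fun s hs ↦ ⟨by linarith [hs.2], by linarith [hs.1]⟩
  rw [← Icc_union_Ioc_eq_Icc ha (by linarith), injOn_union
    ((Iic_disjoint_Ioi le_rfl).mono Icc_subset_Iic_self Ioc_subset_Ioi_self)]
  refine ⟨(injOn_taylorNorm habv hN m).congr fun s hs ↦ (joinPath_of_le hs.2).symm, ?_, ?_⟩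
  · intro s hs s' hs' h
    rw [joinPath_of_ge habv hN hN' hs.1.le, joinPath_of_ge habv hN hN' hs'.1.le] at h
    linarith [injOn_taylorNorm habv hN' m (hrefl s hs) (hrefl s' hs') h]
  · intro s hs s' hs' h
    rw [joinPath_of_le hs.2, joinPath_of_ge habv hN hN' hs'.1.le] at h
    linarith [hs'.1,
      eq_mergeRadius_of_taylorNorm_eq habv hN hN' (ha0.trans hs.1) hs.2 (hrefl s' hs') h]

theorem exists_joinPath_eq_taylorNorm {s : ℝ} (hs : s ∈ Icc (min (radius N) (mergeRadius N N'))
    (2 * mergeRadius N N' - min (radius N') (mergeRadius N N'))) :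
    ∃ r ∈ Icc 0 (mergeRadius N N'),
      joinPath N N' s = taylorNorm N r ∨ joinPath N N' s = taylorNorm N' r := by
  rcases le_total s (mergeRadius N N') with hsm | hms
  · exact ⟨s, ⟨(le_min (radius_nonneg hN) (mergeRadius_nonneg N N')).trans hs.1, hsm⟩,
      Or.inl (joinPath_of_le hsm)⟩
  · refine ⟨2 * mergeRadius N N' - s, ⟨?_, by linarith⟩, Or.inr (joinPath_of_ge habv hN hN' hms)⟩
    linarith [hs.2, min_le_right (radius N') (mergeRadius N N'),
      le_min (radius_nonneg hN') (mergeRadius_nonneg N N')]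

end MergeRadius

namespace BerkLine

theorem continuous_apply (p : K[X]) : Continuous fun σ : BerkLine K abv ↦ σ.1 p :=
  (_root_.continuous_apply p).comp continuous_subtype_val

def segment (ξ ξ' : BerkLine K abv) : Set (BerkLine K abv) :=
  {σ | ∃ r ∈ Icc 0 (mergeRadius ξ.1 ξ'.1), σ.1 = taylorNorm ξ.1 r ∨ σ.1 = taylorNorm ξ'.1 r}

section Segment

variable [IsAlgClosed K] (habv : IsNonarchAbs abv)
include habv

theorem val_eq_taylorNorm_of_apply_X_sub_C {σ : BerkLine K abv} {N : K[X] → ℝ}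
    (hN : IsMultSeminorm abv N) {c : K} {t : ℝ} (hc : N (X - C c) ≤ t)
    (hσc : σ.1 (X - C c) = t) (hσ : ∀ b, t ≤ abv (c - b) → t ≤ σ.1 (X - C b)) :
    σ.1 = taylorNorm N t := by
  refine σ.2.ext (isMultSeminorm_taylorNorm habv hN ((hN.1 _).trans hc)) fun a ↦ ?_
  have hXa : X - C a = (X - C c) + C (c - a) := by rw [C_sub]; ring
  rw [taylorNorm_X_sub_C_of_le habv hN hc a, hXa]
  by_cases h : t = abv (c - a)
  · rw [← h, max_self]
    refine le_antisymm ((σ.2.isNonarchimedean habv _ _).trans ?_) (hXa ▸ hσ a h.le)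
    rw [hσc, σ.2.map_C, ← h, max_self]
  · rw [σ.2.map_add_eq_max_of_ne habv (by rwa [hσc, σ.2.map_C]), hσc, σ.2.map_C, max_comm]

theorem taylorNorm_mem_image_of_isPreconnected {ξ ξ' : BerkLine K abv}
    {S : Set (BerkLine K abv)} (hS : IsPreconnected S) (hξ : ξ ∈ S) (hξ' : ξ' ∈ S) {t : ℝ}
    (ht : 0 ≤ t) (htm : t ≤ mergeRadius ξ.1 ξ'.1) : taylorNorm ξ.1 t ∈ Subtype.val '' S := by
  by_cases hξt : taylorNorm ξ.1 t = ξ.1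
  · exact ⟨ξ, hξ, hξt.symm⟩
  by_cases hξ't : taylorNorm ξ.1 t = ξ'.1
  · exact ⟨ξ', hξ', hξ't.symm⟩
  obtain ⟨c, hc⟩ := exists_X_sub_C_lt_of_radius_lt
    (not_le.mp fun h ↦ hξt (taylorNorm_eq_self habv ξ.2 ht h))
  -- Removing `taylorNorm ξ.1 t` splits the line into the open sets `U ∋ ξ` and `V ∋ ξ'`.
  let U : Set (BerkLine K abv) := {σ | σ.1 (X - C c) < t}
  let V : Set (BerkLine K abv) :=
    {σ | t < σ.1 (X - C c)} ∪ ⋃ b ∈ {b | t ≤ abv (c - b)}, {σ | σ.1 (X - C b) < t}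
  have hU : IsOpen U := isOpen_Iio.preimage (continuous_apply _)
  have hV : IsOpen V := (isOpen_Ioi.preimage (continuous_apply _)).union
    (isOpen_biUnion fun _ _ ↦ isOpen_Iio.preimage (continuous_apply _))
  have hUV : Disjoint U V := by
    refine Set.disjoint_left.mpr fun σ (hσU : σ.1 (X - C c) < t) hσV ↦ ?_
    rcases hσV with hσc | hσV
    · exact lt_asymm hσU hσc
    · obtain ⟨b, hb, hσb⟩ := mem_iUnion₂.mp hσV
      exact ((σ.2.abv_sub_le_max habv b c).trans_lt (max_lt hσb hσU)).not_ge hb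
  have hcompl : ∀ σ ∉ U, σ ∉ V → σ.1 = taylorNorm ξ.1 t := fun σ hσU hσV ↦
    val_eq_taylorNorm_of_apply_X_sub_C habv ξ.2 hc.le
      (le_antisymm (not_lt.mp fun h ↦ hσV (Or.inl h)) (not_lt.mp hσU))
      fun b hb ↦ not_lt.mp fun h ↦ hσV (Or.inr (mem_biUnion hb h))
  have hξ'U : ξ' ∉ U := fun h ↦ (htm.trans (mergeRadius_le_of_X_sub_C_le habv ξ.2 ξ'.2
    (le_max_left _ _) (le_max_right _ _))).not_gt (max_lt hc h)
  have hξ'V : ξ' ∈ V := by_contra fun h ↦ hξ't (hcompl ξ' hξ'U h).symm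
  by_contra hζ
  have hSUV : S ⊆ U ∪ V := fun σ hσ ↦ by
    by_contra h
    rw [mem_union, not_or] at h
    exact hζ ⟨σ, hσ, hcompl σ h.1 h.2⟩
  rcases hS.subset_or_subset hU hV hUV hSUV with hSU | hSV
  · exact hξ'U (hSU hξ')
  · exact Set.disjoint_left.mp hUV hc (hSV hξ)

theorem segment_subset_of_isPreconnected {ξ ξ' : BerkLine K abv} {S : Set (BerkLine K abv)}
    (hS : IsPreconnected S) (hξ : ξ ∈ S) (hξ' : ξ' ∈ S) : segment ξ ξ' ⊆ S := by
  rintro σ ⟨r, hr, hσ | hσ⟩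
  · obtain ⟨τ, hτ, hτσ⟩ := taylorNorm_mem_image_of_isPreconnected habv hS hξ hξ' hr.1 hr.2
    rwa [← Subtype.ext (hτσ.trans hσ.symm)]
  · obtain ⟨τ, hτ, hτσ⟩ := taylorNorm_mem_image_of_isPreconnected habv hS hξ' hξ hr.1
      (mergeRadius_comm ξ.1 ξ'.1 ▸ hr.2)
    rwa [← Subtype.ext (hτσ.trans hσ.symm)]

theorem exists_arc {ξ ξ' : BerkLine K abv} (h : ξ ≠ ξ') :
    ∃ γ : unitInterval → BerkLine K abv, Continuous γ ∧ Function.Injective γ ∧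
      γ 0 = ξ ∧ γ 1 = ξ' ∧ range γ ⊆ segment ξ ξ' := by
  set m := mergeRadius ξ.1 ξ'.1
  have ha := min_le_right (radius ξ.1) m
  have hb := min_le_right (radius ξ'.1) m
  have hab : min (radius ξ.1) m < 2 * m - min (radius ξ'.1) m := by
    by_contra! hle
    have hξm : m ≤ radius ξ.1 := min_eq_right_iff.mp (by linarith)
    have hξ'm : m ≤ radius ξ'.1 := min_eq_right_iff.mp (by linarith)
    refine h (Subtype.ext ?_)
    rw [← taylorNorm_eq_self habv ξ.2 (mergeRadius_nonneg _ _) hξm,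
      taylorNorm_eq_of_mergeRadius_le habv ξ.2 ξ'.2 le_rfl,
      taylorNorm_eq_self habv ξ'.2 (mergeRadius_nonneg _ _) hξ'm]
  obtain ⟨γ, hγ, hγi, hγ0, hγ1, hγr⟩ := exists_arc_of_injOn hab
    (continuous_joinPath habv ξ.2 ξ'.2).continuousOn (injOn_joinPath habv ξ.2 ξ'.2)
  have hγseg : ∀ u, ∃ r ∈ Icc 0 m, γ u = taylorNorm ξ.1 r ∨ γ u = taylorNorm ξ'.1 r := fun u ↦ by
    obtain ⟨s, hs, hsu⟩ := hγr ▸ mem_range_self u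
    exact hsu ▸ exists_joinPath_eq_taylorNorm habv ξ.2 ξ'.2 hs
  have hγmem : ∀ u, IsMultSeminorm abv (γ u) := fun u ↦ by
    obtain ⟨r, hr, hu | hu⟩ := hγseg u <;> rw [hu]
    exacts [isMultSeminorm_taylorNorm habv ξ.2 hr.1, isMultSeminorm_taylorNorm habv ξ'.2 hr.1]
  refine ⟨fun u ↦ ⟨γ u, hγmem u⟩, hγ.subtype_mk _, fun u v huv ↦ hγi (congrArg Subtype.val huv),
    Subtype.ext (hγ0.trans ?_), Subtype.ext (hγ1.trans ?_), range_subset_iff.mpr hγseg⟩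
  · rw [joinPath_of_le ha, taylorNorm_eq_self habv ξ.2
      (le_min (radius_nonneg ξ.2) (mergeRadius_nonneg _ _)) (min_le_left _ _)]
  · rw [joinPath_of_ge habv ξ.2 ξ'.2 (by linarith), sub_sub_cancel, taylorNorm_eq_self habv ξ'.2
      (le_min (radius_nonneg ξ'.2) (mergeRadius_nonneg _ _)) (min_le_left _ _)]

theorem range_eq_range_of_arc {ξ ξ' : BerkLine K abv} {γ γ' : unitInterval → BerkLine K abv}
    (hγ : Continuous γ) (hγi : Function.Injective γ) (hγ0 : γ 0 = ξ) (hγ1 : γ 1 = ξ')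
    (hγ' : Continuous γ') (hγ'i : Function.Injective γ') (hγ'0 : γ' 0 = ξ) (hγ'1 : γ' 1 = ξ') :
    range γ = range γ' := by
  have hne : ξ ≠ ξ' := fun h ↦ zero_ne_one (hγi (hγ0.trans (h.trans hγ1.symm)))
  obtain ⟨γ₀, hγ₀, -, hγ₀0, hγ₀1, hγ₀seg⟩ := exists_arc habv hne
  have key : ∀ δ : unitInterval → BerkLine K abv, Continuous δ → Function.Injective δ →
      δ 0 = ξ → δ 1 = ξ' → range γ₀ = range δ := fun δ hδ hδi hδ0 hδ1 ↦
    eq_range_of_isPreconnected hδ hδi (isPreconnected_range hγ₀)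
      (hγ₀seg.trans (segment_subset_of_isPreconnected habv (isPreconnected_range hδ)
        ⟨0, hδ0⟩ ⟨1, hδ1⟩)) ⟨0, hγ₀0.trans hδ0.symm⟩ ⟨1, hγ₀1.trans hδ1.symm⟩
  rw [← key γ hγ hγi hγ0 hγ1, key γ' hγ' hγ'i hγ'0 hγ'1]

end Segment

theorem isCompact_setOf_apply_X_le (habv : IsNonarchAbs abv) (R : ℝ) :
    IsCompact {σ : BerkLine K abv | σ.1 X ≤ R} := by
  have himage : Subtype.val '' {σ : BerkLine K abv | σ.1 X ≤ R} =
      {N | IsMultSeminorm abv N} ∩ {N | N X ≤ R} := by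
    ext N
    exact ⟨fun ⟨σ, hσ, hσN⟩ ↦ hσN ▸ ⟨σ.2, hσ⟩, fun ⟨hN, hNX⟩ ↦ ⟨⟨N, hN⟩, hNX, rfl⟩⟩
  rw [Topology.IsEmbedding.subtypeVal.isCompact_iff, himage]
  refine (isCompact_univ_pi fun f ↦ isCompact_Icc).of_isClosed_subset
    ((isClosed_setOf_isMultSeminorm abv).inter
      (isClosed_le (_root_.continuous_apply X) continuous_const))
    fun N ⟨hN, hNX⟩ ↦ mem_univ_pi.mpr fun f ↦ ⟨hN.1 f, hN.le_sum_of_apply_X_le habv hNX f⟩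

theorem locallyCompactSpace (habv : IsNonarchAbs abv) : LocallyCompactSpace (BerkLine K abv) :=
  have : WeaklyLocallyCompactSpace (BerkLine K abv) := ⟨fun ξ ↦
    ⟨_, isCompact_setOf_apply_X_le habv (ξ.1 X + 1), mem_of_superset
      ((isOpen_Iio.preimage (continuous_apply X)).mem_nhds (lt_add_one (ξ.1 X)))
      fun σ (h : σ.1 X < _) ↦ h.le⟩⟩
  inferInstance

end BerkLine

end Berkovich

theorem stmt4_general {K : Type*} [Field K] [IsAlgClosed K] (abv : K → ℝ)
    (habv : IsNonarchAbs abv) :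
    T2Space (BerkLine K abv) ∧
    LocallyCompactSpace (BerkLine K abv) ∧
    (∀ ξ ξ' : BerkLine K abv, ξ ≠ ξ' →
      ∃ γ : unitInterval → BerkLine K abv,
        Continuous γ ∧ Function.Injective γ ∧ γ 0 = ξ ∧ γ 1 = ξ') ∧
    (∀ (ξ ξ' : BerkLine K abv) (γ γ' : unitInterval → BerkLine K abv),
      Continuous γ → Function.Injective γ → γ 0 = ξ → γ 1 = ξ' →
      Continuous γ' → Function.Injective γ' → γ' 0 = ξ → γ' 1 = ξ' →
      Set.range γ = Set.range γ') :=
  ⟨inferInstance, BerkLine.locallyCompactSpace habv,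
    fun _ _ h ↦ (BerkLine.exists_arc habv h).imp fun _ hγ ↦ ⟨hγ.1, hγ.2.1, hγ.2.2.1, hγ.2.2.2.1⟩,
    fun _ _ _ _ hγ hγi hγ0 hγ1 hγ' hγ'i hγ'0 hγ'1 ↦
      BerkLine.range_eq_range_of_arc habv hγ hγi hγ0 hγ1 hγ' hγ'i hγ'0 hγ'1⟩

theorem stmt4 {K : Type*} [Field K] [IsAlgClosed K] (abv : K → ℝ)
    (habv : IsNonarchAbs abv)
    (hnontriv : ∃ x : K, abv x ≠ 0 ∧ abv x ≠ 1)
    (hcomplete : ∀ s : ℕ → K,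
      (∀ ε : ℝ, 0 < ε → ∃ N, ∀ m ≥ N, ∀ n ≥ N, abv (s m - s n) < ε) →
      ∃ x : K, ∀ ε : ℝ, 0 < ε → ∃ N, ∀ n ≥ N, abv (s n - x) < ε) :
    T2Space (BerkLine K abv) ∧
    LocallyCompactSpace (BerkLine K abv) ∧
    (∀ ξ ξ' : BerkLine K abv, ξ ≠ ξ' →
      ∃ γ : unitInterval → BerkLine K abv,
        Continuous γ ∧ Function.Injective γ ∧ γ 0 = ξ ∧ γ 1 = ξ') ∧
    (∀ (ξ ξ' : BerkLine K abv) (γ γ' : unitInterval → BerkLine K abv),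
      Continuous γ → Function.Injective γ → γ 0 = ξ → γ 1 = ξ' →
      Continuous γ' → Function.Injective γ' → γ' 0 = ξ → γ' 1 = ξ' →
      Set.range γ = Set.range γ') :=
  stmt4_general abv habv
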